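/- Let Q_n be defined by Q₀ = 1, Q₁(x) = x, Q_{n+1}(x) = x Q_n(x) − β_n Q_{n-1}(x) with β_n = n+2 for odd n and n for even n. Let u, v be pure unit quaternions and s, t positive reals with s ≠ t, and set K_n(us, vt) = Σ_{k=0}^{n} P_k(us) conj(P_k(vt))/h_k where P_k(us) = u^k Q_k(s). Then K_n(us, vt) = ρ_n(s,t)·(1 − uv)/2 + (−1)^n δ_n(s,t)·(1 + uv)/2, where ρ_n(s,t) = (Q_n(s)Q_{n+1}(t) − Q_{n+1}(s)Q_n(t))/(h_n(t − s)) and δ_n(s,t) = (Q_n(s)Q_{n+1}(t) + Q_{n+1}(s)Q_n(t))/(h_n(t + s)). -/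

import Mathlib

/-!
The quaternionic part separates from the real part: for pure unit quaternions `u^k conj(v^k)`
equals `1` for even `k` and `-uv` for odd `k`, i.e. `((1 - uv) + (-1)^k (1 + uv))/2`. Hence
`K_n` is `(1 - uv)/2` times `Σ Q_k(s) Q_k(t)/h_k` plus `(1 + uv)/2` times the same sum with `s`
replaced by `-s`, since `Q_k` has the parity of `k`. Both sums are evaluated by the
Christoffel–Darboux formula, which holds because `h_{n+1} = β_{n+1} h_n`.
-/

open Polynomial Quaternion Finset

noncomputable def β (n : ℕ) : ℝ := if Odd n then n + 2 else n

noncomputable def Q : ℕ → Polynomial ℝ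
  | 0 => 1
  | 1 => X
  | (n + 2) => X * Q (n + 1) - C (β (n + 1)) * Q n

noncomputable def h (n : ℕ) : ℝ :=
  if Odd n then (n.factorial : ℝ) * (n + 2) else ((n + 1).factorial : ℝ)

/-- The kernel evaluated at `x = u s`, `y = v t`, using `P_k(us) = u^k Q_k(s)`. -/
noncomputable def K (n : ℕ) (u v : ℍ[ℝ]) (s t : ℝ) : ℍ[ℝ] :=
  ∑ k ∈ range (n + 1),
    (h k)⁻¹ • (((Q k).eval s • u ^ k) * star ((Q k).eval t • v ^ k))

lemma h_pos (n : ℕ) : 0 < h n := by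
  unfold h
  split <;> positivity

lemma h_succ (n : ℕ) : h (n + 1) = β (n + 1) * h n := by
  rcases Nat.even_or_odd n with hn | hn
  · have hn' : ¬Odd n := Nat.not_odd_iff_even.mpr hn
    simp only [h, β, hn.add_one, hn', if_true, if_false, Nat.factorial_succ]
    push_cast
    ring
  · have hn' : ¬Odd (n + 1) := Nat.not_odd_iff_even.mpr hn.add_one
    simp only [h, β, hn, hn', if_true, if_false, Nat.factorial_succ]
    push_cast
    ring

lemma Q_eval_add_two (n : ℕ) (x : ℝ) :
    (Q (n + 2)).eval x = x * (Q (n + 1)).eval x - β (n + 1) * (Q n).eval x := by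
  simp [Q]

lemma Q_eval_neg (n : ℕ) (x : ℝ) : (Q n).eval (-x) = (-1) ^ n * (Q n).eval x := by
  induction n using Nat.twoStepInduction with
  | zero => simp [Q]
  | one => simp [Q]
  | more n ih₀ ih₁ =>
    rw [Q_eval_add_two, Q_eval_add_two, ih₀, ih₁]
    ring

/-- Christoffel–Darboux formula for `Q`, normalized by `h`. -/
lemma sub_mul_sum_Q_eval_mul_div_h (n : ℕ) (s t : ℝ) :
    (t - s) * ∑ k ∈ range (n + 1), (Q k).eval s * (Q k).eval t / h k
      = ((Q n).eval s * (Q (n + 1)).eval t - (Q (n + 1)).eval s * (Q n).eval t) / h n := by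
  induction n with
  | zero => simp [Q, h]
  | succ n ih =>
    have hβ : β (n + 1) ≠ 0 := left_ne_zero_of_mul (h_succ n ▸ (h_pos (n + 1)).ne')
    have hn := (h_pos n).ne'
    rw [sum_range_succ, mul_add, ih, Q_eval_add_two, Q_eval_add_two, h_succ]
    field_simp
    ring

lemma sum_Q_eval_mul_div_h (n : ℕ) {s t : ℝ} (hst : s ≠ t) :
    ∑ k ∈ range (n + 1), (Q k).eval s * (Q k).eval t / h k
      = ((Q n).eval s * (Q (n + 1)).eval t - (Q (n + 1)).eval s * (Q n).eval t)
          / (h n * (t - s)) := by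
  have hts : t - s ≠ 0 := sub_ne_zero.mpr hst.symm
  rw [← div_div, ← sub_mul_sum_Q_eval_mul_div_h, mul_div_cancel_left₀ _ hts]

lemma Quaternion.mul_self_eq_neg_one_of_re_eq_zero {u : ℍ[ℝ]} (hu : u.re = 0)
    (hu1 : ‖u‖ = 1) : u * u = -1 := by
  have hunit : u * star u = 1 := by
    rw [self_mul_star, normSq_eq_norm_mul_self, hu1]
    norm_num
  rwa [star_eq_neg.mpr hu, mul_neg, neg_eq_iff_eq_neg] at hunit

lemma pow_mul_star_pow_eq {A : Type*} [Ring A] [StarRing A] [Algebra ℝ A] {u v : A}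
    (hu : u * u = -1) (hv : v * v = -1) (hvs : star v = -v) (k : ℕ) :
    u ^ k * star (v ^ k) = (2⁻¹ : ℝ) • (1 - u * v) + ((-1) ^ k * 2⁻¹ : ℝ) • (1 + u * v) := by
  induction k using Nat.twoStepInduction with
  | zero => simp only [pow_zero, star_one, mul_one, one_mul]; module
  | one => simp only [pow_one, hvs, mul_neg]; module
  | more k ih _ =>
    have hk : (-1 : ℝ) ^ (k + 2) = (-1) ^ k := by ring
    rw [pow_add, pow_add, sq, sq, hu, hv, star_mul, star_neg, star_one, hk, ← ih]
    noncomm_ring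

lemma K_eq_of_mul_self_eq_neg_one {u v : ℍ[ℝ]} (hu : u * u = -1) (hv : v * v = -1)
    (hvs : star v = -v) (n : ℕ) (s t : ℝ) :
    K n u v s t
      = ((∑ k ∈ range (n + 1), (Q k).eval s * (Q k).eval t / h k) / 2) • (1 - u * v)
        + ((∑ k ∈ range (n + 1), (Q k).eval (-s) * (Q k).eval t / h k) / 2) • (1 + u * v) := by
  simp only [div_eq_mul_inv _ (2 : ℝ), sum_mul, sum_smul, ← sum_add_distrib, K]
  refine sum_congr rfl fun k _ ↦ ?_
  rw [Quaternion.star_smul, smul_mul_assoc, mul_smul_comm, pow_mul_star_pow_eq hu hv hvs,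
    Q_eval_neg]
  module

theorem stmt16 (n : ℕ) (u v : ℍ[ℝ])
    (hu : u.re = 0) (hu1 : ‖u‖ = 1) (hv : v.re = 0) (hv1 : ‖v‖ = 1)
    (s t : ℝ) (hs : 0 < s) (ht : 0 < t) (hst : s ≠ t) :
    K n u v s t
      = (((Q n).eval s * (Q (n + 1)).eval t - (Q (n + 1)).eval s * (Q n).eval t)
            / (h n * (t - s)) / 2) • (1 - u * v)
        + ((-1 : ℝ) ^ n *
            (((Q n).eval s * (Q (n + 1)).eval t + (Q (n + 1)).eval s * (Q n).eval t)
              / (h n * (t + s))) / 2) • (1 + u * v) := by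
  have hsneg : -s ≠ t := by linarith
  rw [K_eq_of_mul_self_eq_neg_one (mul_self_eq_neg_one_of_re_eq_zero hu hu1)
    (mul_self_eq_neg_one_of_re_eq_zero hv hv1) (star_eq_neg.mpr hv),
    sum_Q_eval_mul_div_h n hst, sum_Q_eval_mul_div_h n hsneg, Q_eval_neg, Q_eval_neg, sub_neg_eq_add]
  congr 2
  ring
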